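/- Every term typable in system D is strongly normalizing for the union of the reduction rules β, δ, γ, and assoc. -/

import Mathlib

/-- Untyped λ-terms in de Bruijn representation. -/
inductive Term : Type
  | var : ℕ → Term
  | lam : Term → Term
  | app : Term → Term → Term
  deriving DecidableEq

namespace Term

/-- Shift (lift) all de Bruijn indices ≥ d by one. -/
def lift (d : ℕ) : Term → Term
  | var n => var (if n < d then n else n + 1)
  | lam t => lam (lift (d + 1) t)
  | app t u => app (lift d t) (lift d u)

/-- Capture-avoiding substitution `t[k := u]` (de Bruijn style). -/
def subst : Term → ℕ → Term → Term
  | var n, k, u => if n = k then u else var (if n < k then n else n - 1)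
  | lam t, k, u => lam (subst t (k + 1) (lift 0 u))
  | app t v, k, u => app (subst t k u) (subst v k u)

/-- Swap the de Bruijn indices d and d+1 (exchange of two adjacent binders). -/
def swap (d : ℕ) : Term → Term
  | var n => var (if n = d then d + 1 else if n = d + 1 then d else n)
  | lam t => lam (swap (d + 1) t)
  | app t u => app (swap d t) (swap d u)

end Term

/-- The four reduction rules. -/
inductive Rule | beta | delta | gamma | assoc

/-- One-step reduction by a given rule (closed under congruence).
β: (λx.M N) ▷ M[x:=N];
δ: (λy.λx.M N) ▷ λx.(λy.M N), x ∉ FV(N);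
γ: (λx.M N P) ▷ (λx.(M P) N), x ∉ FV(P);
assoc: (M (λx.N P)) ▷ (λx.(M N) P), x ∉ FV(M).
Freshness conditions are realized by lifting. -/
inductive Step : Rule → Term → Term → Prop
  | beta (M N) : Step .beta (.app (.lam M) N) (Term.subst M 0 N)
  | delta (M N) : Step .delta (.app (.lam (.lam M)) N)
      (.lam (.app (.lam (Term.swap 0 M)) (Term.lift 0 N)))
  | gamma (M N P) : Step .gamma (.app (.app (.lam M) N) P)
      (.app (.lam (.app M (Term.lift 0 P))) N)
  | assoc (M N P) : Step .assoc (.app M (.app (.lam N) P))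
      (.app (.lam (.app (Term.lift 0 M) N)) P)
  | appCongL {r t t'} (u) : Step r t t' → Step r (.app t u) (.app t' u)
  | appCongR {r u u'} (t) : Step r u u' → Step r (.app t u) (.app t u')
  | lamCong {r t t'} : Step r t t' → Step r (.lam t) (.lam t')

/-- One-step reduction by the union of the four rules. -/
def StepAll (t t' : Term) : Prop := ∃ r, Step r t t'

/-- Strong normalization for the union of β, δ, γ, assoc. -/
def SN (t : Term) : Prop := Acc (fun a b => StepAll b a) t

/-- Strong normalization for β alone. -/
def SNbeta (t : Term) : Prop := Acc (fun a b => Step .beta b a) t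

mutual
/-- Simple types: atoms and arrows with simple codomain. -/
inductive STy : Type
  | atom : ℕ → STy
  | arrow : Ty → STy → STy
/-- Types of system D: intersections of simple types. -/
inductive Ty : Type
  | simple : STy → Ty
  | inter : STy → Ty → Ty
end

/-- Typing judgment of system D (contexts are lists of types, de Bruijn). -/
inductive Typing : List Ty → Term → Ty → Prop
  | var {Γ n A} : Γ[n]? = some A → Typing Γ (.var n) A
  | app {Γ M N A B} : Typing Γ M (.simple (.arrow A B)) → Typing Γ N A →
      Typing Γ (.app M N) (.simple B)
  | lam {Γ M A B} : Typing (A :: Γ) M (.simple B) →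
      Typing Γ (.lam M) (.simple (.arrow A B))
  | interI {Γ M A B} : Typing Γ M (.simple A) → Typing Γ M B →
      Typing Γ M (.inter A B)
  | interE1 {Γ M A B} : Typing Γ M (.inter A B) → Typing Γ M (.simple A)
  | interE2 {Γ M A B} : Typing Γ M (.inter A B) → Typing Γ M B

/-- A term is typable in system D. -/
def Typable (t : Term) : Prop := ∃ Γ A, Typing Γ t A

/-- (H M₁ ... Mₙ). -/
def appList (H : Term) (Ms : List Term) : Term := Ms.foldl .app H


/-!
Tait–Girard reducibility: an atom is interpreted by the SN terms, an arrow by the usual function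
space, an intersection by intersection. Variables are reducible, reducible terms are SN, and a
typable term instantiated by reducible terms is reducible.

Because δ, γ and assoc move redexes around, closure under weak head expansion has to be proved for
a redex `(λu) v` in any context `K` of abstractions and function positions of applications
(`Ctx.sn_redex`): if `v` and `K[u[v]]` are SN, so is `K[(λu) v]`. The induction is on the
lexicographic triple (longest reduction of `v`, longest reduction of `K[u[v]]`, a polynomial
weight). A step out of `K[(λu) v]` reduces `v`; or it is mirrored by a step of `K[u[v]]` and leaves
a redex of the same shape; or it contracts the redex; or it is a δ- or γ-step that only moves the
redex and lowers the weight; or it is an assoc step with `v = (λZ) W`, handled by induction first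
for `Z[W]` and then for `W`. Variable-headed spines of SN terms are SN by the same lemma, with the
sum of the longest-reduction lengths of the arguments as measure.
-/

namespace Term

def upRen (ρ : ℕ → ℕ) : ℕ → ℕ
  | 0 => 0
  | n + 1 => ρ n + 1

def rename (ρ : ℕ → ℕ) : Term → Term
  | var n => var (ρ n)
  | lam t => lam (rename (upRen ρ) t)
  | app t u => app (rename ρ t) (rename ρ u)

def up (σ : ℕ → Term) : ℕ → Term
  | 0 => var 0
  | n + 1 => rename Nat.succ (σ n)

def msubst (σ : ℕ → Term) : Term → Term
  | var n => σ n
  | lam t => lam (msubst (up σ) t)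
  | app t u => app (msubst σ t) (msubst σ u)

theorem rename_rename (ρ₁ ρ₂ : ℕ → ℕ) (t : Term) :
    rename ρ₂ (rename ρ₁ t) = rename (ρ₂ ∘ ρ₁) t := by
  induction t generalizing ρ₁ ρ₂ with
  | var n => rfl
  | lam t ih =>
    simp only [rename, ih]
    congr 2
    funext n
    cases n <;> rfl
  | app a b iha ihb => simp only [rename, iha, ihb]

theorem msubst_rename (ρ : ℕ → ℕ) (σ : ℕ → Term) (t : Term) :
    msubst σ (rename ρ t) = msubst (σ ∘ ρ) t := by
  induction t generalizing ρ σ with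
  | var n => rfl
  | lam t ih =>
    simp only [rename, msubst, ih]
    congr 2
    funext n
    cases n <;> rfl
  | app a b iha ihb => simp only [rename, msubst, iha, ihb]

theorem rename_msubst (ρ : ℕ → ℕ) (σ : ℕ → Term) (t : Term) :
    rename ρ (msubst σ t) = msubst (rename ρ ∘ σ) t := by
  induction t generalizing ρ σ with
  | var n => rfl
  | lam t ih =>
    simp only [rename, msubst, ih]
    congr 2
    funext n
    cases n with
    | zero => rfl
    | succ n => simp only [Function.comp, up, rename_rename]; rfl
  | app a b iha ihb => simp only [rename, msubst, iha, ihb]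

theorem msubst_msubst (σ₁ σ₂ : ℕ → Term) (t : Term) :
    msubst σ₂ (msubst σ₁ t) = msubst (msubst σ₂ ∘ σ₁) t := by
  induction t generalizing σ₁ σ₂ with
  | var n => rfl
  | lam t ih =>
    simp only [msubst, ih]
    congr 2
    funext n
    cases n with
    | zero => rfl
    | succ n => simp only [Function.comp, up, msubst_rename, rename_msubst]; rfl
  | app a b iha ihb => simp only [msubst, iha, ihb]

theorem up_var_comp (ρ : ℕ → ℕ) : up (var ∘ ρ) = var ∘ upRen ρ := by
  funext n
  cases n <;> rfl

theorem rename_eq_msubst (ρ : ℕ → ℕ) (t : Term) : rename ρ t = msubst (var ∘ ρ) t := by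
  induction t generalizing ρ with
  | var n => rfl
  | lam t ih => simp only [rename, msubst, ih, up_var_comp]
  | app a b iha ihb => simp only [rename, msubst, iha, ihb]

theorem msubst_var (t : Term) : msubst var t = t := by
  have up_var : up var = var := by
    funext n
    cases n <;> rfl
  induction t with
  | var n => rfl
  | lam t ih => simp only [msubst, up_var, ih]
  | app a b iha ihb => simp only [msubst, iha, ihb]

def liftRen (d n : ℕ) : ℕ := if n < d then n else n + 1

def swapRen (d n : ℕ) : ℕ := if n = d then d + 1 else if n = d + 1 then d else n

def substAt (k : ℕ) (u : Term) (n : ℕ) : Term :=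
  if n = k then u else var (if n < k then n else n - 1)

theorem liftRen_zero : liftRen 0 = Nat.succ := rfl

theorem upRen_liftRen (d : ℕ) : upRen (liftRen d) = liftRen (d + 1) := by
  funext n
  cases n <;> simp only [upRen, liftRen] <;> split_ifs <;> omega

theorem lift_eq_rename (d : ℕ) (t : Term) : lift d t = rename (liftRen d) t := by
  induction t generalizing d with
  | var n => rfl
  | lam t ih => simp only [lift, rename, ih, upRen_liftRen]
  | app a b iha ihb => simp only [lift, rename, iha, ihb]

theorem swap_eq_rename (d : ℕ) (t : Term) : swap d t = rename (swapRen d) t := by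
  induction t generalizing d with
  | var n => rfl
  | lam t ih =>
    have : upRen (swapRen d) = swapRen (d + 1) := by
      funext n
      cases n <;> simp only [upRen, swapRen] <;> split_ifs <;> omega
    simp only [swap, rename, ih, this]
  | app a b iha ihb => simp only [swap, rename, iha, ihb]

theorem subst_eq_msubst (t : Term) (k : ℕ) (u : Term) : subst t k u = msubst (substAt k u) t := by
  induction t generalizing k u with
  | var n => rfl
  | lam t ih =>
    have : up (substAt k u) = substAt (k + 1) (lift 0 u) := by
      funext n
      cases n with
      | zero => simp [up, substAt]
      | succ n =>
        by_cases h : n = k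
        · simp [up, substAt, h, lift_eq_rename, liftRen_zero]
        · simp only [up, substAt, h, if_false, rename, Nat.add_right_cancel_iff]
          congr 1
          split_ifs <;> omega
    simp only [subst, msubst, ih, this]
  | app a b iha ihb => simp only [subst, msubst, iha, ihb]

theorem substAt_zero_comp_succ (w : Term) : substAt 0 w ∘ Nat.succ = var := by
  funext n
  simp [substAt]

theorem msubst_subst_zero (σ : ℕ → Term) (a b : Term) :
    msubst σ (subst a 0 b) = subst (msubst (up σ) a) 0 (msubst σ b) := by
  simp only [subst_eq_msubst, msubst_msubst]
  congr 1
  funext n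
  cases n with
  | zero => rfl
  | succ n =>
    simp only [Function.comp, up, msubst_rename, substAt_zero_comp_succ, msubst_var]
    rfl

theorem msubst_up_lift_zero (σ : ℕ → Term) (t : Term) :
    msubst (up σ) (lift 0 t) = lift 0 (msubst σ t) := by
  simp only [lift_eq_rename, msubst_rename, rename_msubst, liftRen_zero]
  rfl

theorem msubst_up_up_swap_zero (σ : ℕ → Term) (t : Term) :
    msubst (up (up σ)) (swap 0 t) = swap 0 (msubst (up (up σ)) t) := by
  simp only [swap_eq_rename, msubst_rename, rename_msubst]
  congr 1
  funext n
  match n with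
  | 0 => rfl
  | 1 => rfl
  | n + 2 =>
    have : swapRen 0 (n + 2) = n + 2 := by simp [swapRen]
    simp only [Function.comp, this, up, rename_rename]
    rfl

theorem rename_subst_zero (ρ : ℕ → ℕ) (a b : Term) :
    rename ρ (subst a 0 b) = subst (rename (upRen ρ) a) 0 (rename ρ b) := by
  simp only [rename_eq_msubst, ← up_var_comp, msubst_subst_zero]

theorem lift_zero_subst_zero (a b : Term) :
    lift 0 (subst a 0 b) = subst (lift 1 a) 0 (lift 0 b) := by
  simp only [lift_eq_rename, rename_subst_zero, upRen_liftRen]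

theorem rename_upRen_lift_zero (ρ : ℕ → ℕ) (t : Term) :
    rename (upRen ρ) (lift 0 t) = lift 0 (rename ρ t) := by
  simp only [rename_eq_msubst, ← up_var_comp, msubst_up_lift_zero]

theorem rename_upRen_upRen_swap_zero (ρ : ℕ → ℕ) (t : Term) :
    rename (upRen (upRen ρ)) (swap 0 t) = swap 0 (rename (upRen (upRen ρ)) t) := by
  simp only [rename_eq_msubst, ← up_var_comp, msubst_up_up_swap_zero]

theorem subst_lift_self (k : ℕ) (t u : Term) : subst (lift k t) k u = t := by
  rw [subst_eq_msubst, lift_eq_rename, msubst_rename]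
  conv_rhs => rw [← msubst_var t]
  congr 1
  funext n
  simp only [Function.comp, liftRen, substAt]
  split_ifs <;> first | rfl | omega

theorem subst_swap_zero (u w : Term) : subst (swap 0 u) 0 w = subst u 1 w := by
  simp only [subst_eq_msubst, swap_eq_rename, msubst_rename]
  congr 1
  funext n
  match n with
  | 0 => rfl
  | 1 => rfl
  | n + 2 => simp [swapRen, substAt]

theorem swap_zero_lift_zero_lift_zero (t : Term) :
    swap 0 (lift 0 (lift 0 t)) = lift 0 (lift 0 t) := by
  simp only [swap_eq_rename, lift_eq_rename, rename_rename]
  rfl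

end Term

open Term

theorem Step.msubst {r : Rule} {t t' : Term} (h : Step r t t') (σ : ℕ → Term) :
    Step r (msubst σ t) (msubst σ t') := by
  induction h generalizing σ with
  | beta M N =>
    rw [msubst_subst_zero]
    exact .beta _ _
  | delta M N =>
    simp only [Term.msubst, msubst_up_up_swap_zero, msubst_up_lift_zero]
    exact .delta _ _
  | gamma M N P =>
    simp only [Term.msubst, msubst_up_lift_zero]
    exact .gamma _ _ _
  | assoc M N P =>
    simp only [Term.msubst, msubst_up_lift_zero]
    exact .assoc _ _ _
  | appCongL u _ ih => exact .appCongL _ (ih σ)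
  | appCongR t _ ih => exact .appCongR _ (ih σ)
  | lamCong _ ih => exact .lamCong (ih _)

theorem Step.rename {r : Rule} {t t' : Term} (h : Step r t t') (ρ : ℕ → ℕ) :
    Step r (rename ρ t) (rename ρ t') := by
  simpa only [rename_eq_msubst] using h.msubst (var ∘ ρ)

theorem Step.subst {r : Rule} {t t' : Term} (h : Step r t t') (k : ℕ) (u : Term) :
    Step r (subst t k u) (subst t' k u) := by
  simpa only [subst_eq_msubst] using h.msubst (substAt k u)

/-- No rule has a side condition on free variables, so renamings reflect steps. -/
theorem Step.of_rename {r : Rule} {ρ : ℕ → ℕ} {t s : Term}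
    (h : Step r (Term.rename ρ t) s) :
    ∃ t', Step r t t' ∧ s = Term.rename ρ t' := by
  induction t generalizing ρ s with
  | var n => cases h
  | lam t ih =>
    cases h with
    | lamCong h =>
      obtain ⟨t', ht', rfl⟩ := ih h
      exact ⟨.lam t', .lamCong ht', rfl⟩
  | app a b iha ihb =>
    simp only [Term.rename] at h
    generalize hA : Term.rename ρ a = A at h
    generalize hB : Term.rename ρ b = B at h
    cases h with
    | beta M N =>
      obtain ⟨a, rfl⟩ : ∃ a₀, a = .lam a₀ := by cases a <;> simp_all [Term.rename]
      simp only [Term.rename, Term.lam.injEq] at hA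
      exact ⟨_, .beta a b, by rw [rename_subst_zero, hA, hB]⟩
    | delta M N =>
      obtain ⟨a, rfl⟩ : ∃ a₀, a = .lam (.lam a₀) := by
        rcases a with _ | (_ | _ | _) | _ <;> simp_all [Term.rename]
      simp only [Term.rename, Term.lam.injEq] at hA
      refine ⟨_, .delta a b, ?_⟩
      simp only [Term.rename, rename_upRen_upRen_swap_zero, rename_upRen_lift_zero, hA, hB]
    | gamma M N P =>
      obtain ⟨a, a', rfl⟩ : ∃ a₀ a₁, a = .app (.lam a₀) a₁ := by
        rcases a with _ | _ | (_ | _ | _) <;> simp_all [Term.rename]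
      simp only [Term.rename, Term.app.injEq, Term.lam.injEq] at hA
      refine ⟨_, .gamma a a' b, ?_⟩
      simp only [Term.rename, rename_upRen_lift_zero, hA, hB]
    | assoc M N P =>
      obtain ⟨b, b', rfl⟩ : ∃ b₀ b₁, b = .app (.lam b₀) b₁ := by
        rcases b with _ | _ | (_ | _ | _) <;> simp_all [Term.rename]
      simp only [Term.rename, Term.app.injEq, Term.lam.injEq] at hB
      refine ⟨_, .assoc a b b', ?_⟩
      simp only [Term.rename, rename_upRen_lift_zero, hA, hB]
    | appCongL u h =>
      subst hA hB
      obtain ⟨a', ha', rfl⟩ := iha h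
      exact ⟨.app a' b, .appCongL _ ha', rfl⟩
    | appCongR t h =>
      subst hA hB
      obtain ⟨b', hb', rfl⟩ := ihb h
      exact ⟨.app a b', .appCongR _ hb', rfl⟩

theorem StepAll.lam {t t' : Term} (h : StepAll t t') : StepAll (.lam t) (.lam t') :=
  h.imp fun _ => .lamCong

theorem StepAll.appL {t t' : Term} (u : Term) (h : StepAll t t') : StepAll (.app t u) (.app t' u) :=
  h.imp fun _ => .appCongL u

theorem StepAll.appR {u u' : Term} (t : Term) (h : StepAll u u') : StepAll (.app t u) (.app t u') :=
  h.imp fun _ => .appCongR t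

theorem StepAll.rename {t t' : Term} (h : StepAll t t') (ρ : ℕ → ℕ) :
    StepAll (Term.rename ρ t) (Term.rename ρ t') :=
  h.imp fun _ h => h.rename ρ

theorem StepAll.lift {t t' : Term} (h : StepAll t t') (d : ℕ) :
    StepAll (lift d t) (lift d t') := by
  simpa only [lift_eq_rename] using h.rename (liftRen d)

abbrev Steps : Term → Term → Prop := Relation.ReflTransGen StepAll

theorem Steps.lam {t t' : Term} (h : Steps t t') : Steps (.lam t) (.lam t') :=
  h.lift Term.lam fun _ _ => StepAll.lam

theorem Steps.appL {t t' : Term} (u : Term) (h : Steps t t') : Steps (.app t u) (.app t' u) :=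
  h.lift (Term.app · u) fun _ _ => StepAll.appL u

theorem Steps.appR {u u' : Term} (t : Term) (h : Steps u u') : Steps (.app t u) (.app t u') :=
  h.lift (Term.app t) fun _ _ => StepAll.appR t

theorem Steps.rename {t t' : Term} (h : Steps t t') (ρ : ℕ → ℕ) :
    Steps (Term.rename ρ t) (Term.rename ρ t') :=
  h.lift (Term.rename ρ) fun _ _ h => h.rename ρ

theorem Steps.msubst_of_forall (t : Term) {σ σ' : ℕ → Term}
    (h : ∀ n, Steps (σ n) (σ' n)) :
    Steps (msubst σ t) (msubst σ' t) := by
  induction t generalizing σ σ' with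
  | var n => exact h n
  | lam t ih =>
    refine (ih fun n => ?_).lam
    cases n with
    | zero => exact .refl
    | succ n => exact (h n).rename _
  | app a b iha ihb => exact ((iha h).appL _).trans ((ihb h).appR _)

theorem Steps.subst_of_stepAll (u : Term) (k : ℕ) {v v' : Term} (h : StepAll v v') :
    Steps (subst u k v) (subst u k v') := by
  simp only [subst_eq_msubst]
  refine Steps.msubst_of_forall u fun n => ?_
  unfold substAt
  split_ifs
  exacts [.single h, .refl, .refl]

theorem SN.of_steps {t t' : Term} (h : SN t) (hs : Steps t t') : SN t' := by
  induction hs with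
  | refl => exact h
  | tail _ hs ih => exact ih.inv hs

theorem SN.of_map (f : Term → Term) (hf : ∀ t t', StepAll t t' → StepAll (f t) (f t'))
    {t : Term} (h : SN (f t)) : SN t :=
  Subrelation.accessible (fun {_ _} hs => hf _ _ hs) (InvImage.accessible f h)

theorem SN.of_app_left {a b : Term} (h : SN (.app a b)) : SN a :=
  h.of_map (.app · b) fun _ _ => StepAll.appL b

theorem SN.of_app_right {a b : Term} (h : SN (.app a b)) : SN b :=
  h.of_map (.app a) fun _ _ => StepAll.appR a

namespace Term

def reducts : Term → List Term
  | var _ => []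
  | lam t => (reducts t).map lam
  | app a b =>
    (match a with
      | lam M =>
        subst M 0 b :: match M with
          | lam M₀ => [lam (app (lam (swap 0 M₀)) (lift 0 b))]
          | _ => []
      | app (lam M) N => [app (lam (app M (lift 0 b))) N]
      | _ => []) ++
    (match b with
      | app (lam Z) W => [app (lam (app (lift 0 a) Z)) W]
      | _ => []) ++
    (reducts a).map (app · b) ++ (reducts b).map (app a ·)

theorem mem_reducts {r : Rule} {t t' : Term} (h : Step r t t') : t' ∈ reducts t := by
  induction h with
  | beta | delta | gamma => simp [reducts]
  | assoc M => cases M <;> simp [reducts]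
  | appCongL _ _ ih | appCongR _ _ ih | lamCong _ ih => simp [reducts, ih]

end Term

def BoundedSN : ℕ → Term → Prop
  | 0, t => ∀ t', ¬ StepAll t t'
  | n + 1, t => ∀ t', StepAll t t' → BoundedSN n t'

theorem BoundedSN.mono {m n : ℕ} {t : Term} (h : BoundedSN m t) (hmn : m ≤ n) :
    BoundedSN n t := by
  induction m generalizing n t with
  | zero =>
    cases n with
    | zero => exact h
    | succ n => exact fun t' hs => absurd hs (h t')
  | succ m ih =>
    obtain ⟨n, rfl⟩ : ∃ k, n = k + 1 := ⟨n - 1, by omega⟩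
    exact fun t' hs => ih (h t' hs) (by omega)

theorem SN.exists_boundedSN {t : Term} (h : SN t) : ∃ n, BoundedSN n t := by
  induction h with
  | intro t _ ih =>
    choose! bound hbound using ih
    refine ⟨t.reducts.toFinset.sup bound + 1, fun t' hs => (hbound t' hs).mono ?_⟩
    obtain ⟨r, hr⟩ := hs
    exact Finset.le_sup (List.mem_toFinset.2 (mem_reducts hr))

theorem BoundedSN.arg_of_beta_redex {n : ℕ} {Z W : Term}
    (h : BoundedSN (n + 1) (.app (.lam Z) W)) :
    BoundedSN n W := by
  induction n generalizing W with
  | zero => exact fun W' hs => h _ (hs.appR _) _ ⟨.beta, .beta Z W'⟩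
  | succ n ih => exact fun W' hs => ih (h _ (hs.appR _))

/-- The length of a longest reduction sequence out of an SN term; junk `0` on other terms. -/
noncomputable def height (t : Term) : ℕ :=
  open Classical in if h : ∃ n, BoundedSN n t then Nat.find h else 0

theorem height_le {n : ℕ} {t : Term} (h : BoundedSN n t) : height t ≤ n := by
  classical
  rw [height, dif_pos ⟨n, h⟩]
  exact Nat.find_min' _ h

theorem SN.boundedSN_height {t : Term} (h : SN t) : BoundedSN (height t) t := by
  classical
  rw [height, dif_pos h.exists_boundedSN]
  exact Nat.find_spec h.exists_boundedSN

theorem SN.height_lt {t t' : Term} (h : SN t) (hs : StepAll t t') : height t' < height t := by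
  have hb := h.boundedSN_height
  rcases hn : height t with _ | n
  · rw [hn] at hb
    exact absurd hs (hb t')
  · rw [hn] at hb
    exact Nat.lt_succ_of_le (height_le (hb t' hs))

theorem SN.height_arg_lt {Z W : Term} (h : SN (.app (.lam Z) W)) :
    height W < height (.app (.lam Z) W) := by
  have hb := h.boundedSN_height
  rcases hn : height (.app (.lam Z) W) with _ | n
  · rw [hn] at hb
    exact absurd ⟨.beta, .beta Z W⟩ (hb _)
  · rw [hn] at hb
    exact Nat.lt_succ_of_le (height_le hb.arg_of_beta_redex)

namespace Term

/-- A polynomial interpretation that every root δ- or γ-step decreases. -/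
def weight : Term → ℕ
  | var _ => 1
  | lam t => weight t + 1
  | app a b => weight a * (2 * weight b + 1)

theorem one_le_weight (t : Term) : 1 ≤ weight t := by
  induction t with
  | var n => rfl
  | lam t ih => exact Nat.le_add_left 1 _
  | app a b iha ihb => exact Nat.one_le_iff_ne_zero.2 (Nat.mul_ne_zero (by omega) (by omega))

theorem weight_rename (ρ : ℕ → ℕ) (t : Term) : weight (rename ρ t) = weight t := by
  induction t generalizing ρ with
  | var n => rfl
  | lam t ih => simp only [rename, weight, ih]
  | app a b iha ihb => simp only [rename, weight, iha, ihb]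

theorem weight_lift (d : ℕ) (t : Term) : weight (lift d t) = weight t := by
  rw [lift_eq_rename, weight_rename]

theorem weight_swap (d : ℕ) (t : Term) : weight (swap d t) = weight t := by
  rw [swap_eq_rename, weight_rename]

theorem weight_app_lt_app {a a' : Term} (h : weight a' < weight a) (b : Term) :
    weight (app a' b) < weight (app a b) :=
  Nat.mul_lt_mul_of_pos_right h (by omega)

theorem weight_delta_lt (M N : Term) :
    weight (lam (app (lam (swap 0 M)) (lift 0 N))) < weight (app (lam (lam M)) N) := by
  simp only [weight, weight_swap, weight_lift]
  nlinarith [one_le_weight M, one_le_weight N]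

theorem weight_gamma_lt (M N P : Term) :
    weight (app (lam (app M (lift 0 P))) N) < weight (app (app (lam M) N) P) := by
  simp only [weight, weight_lift]
  nlinarith [one_le_weight M, one_le_weight N, one_le_weight P]

end Term

inductive Ctx
  | hole
  | app (K : Ctx) (P : Term)
  | lam (K : Ctx)

namespace Ctx

def depth : Ctx → ℕ
  | hole => 0
  | app K _ => depth K
  | lam K => depth K + 1

/-- `K[(λu) v]`, where `v` lives outside `K` and is lifted past its binders. -/
def redex : Ctx → Term → Term → Term
  | hole, u, v => .app (.lam u) v
  | app K P, u, v => .app (redex K u v) P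
  | lam K, u, v => .lam (redex K u (lift 0 v))

def contractum : Ctx → Term → Term → Term
  | hole, u, v => subst u 0 v
  | app K P, u, v => .app (contractum K u v) P
  | lam K, u, v => .lam (contractum K u (lift 0 v))

def msubst (σ : ℕ → Term) : Ctx → Ctx
  | hole => hole
  | app K P => app (msubst σ K) (Term.msubst σ P)
  | lam K => lam (msubst (up σ) K)

theorem msubst_redex (σ : ℕ → Term) (K : Ctx) (u v : Term) :
    Term.msubst σ (K.redex u v) =
      (K.msubst σ).redex (Term.msubst (up^[K.depth + 1] σ) u) (Term.msubst σ v) := by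
  induction K generalizing σ v with
  | hole => rfl
  | app K P ih => simp only [redex, Term.msubst, ih]; rfl
  | lam K ih => simp only [redex, Term.msubst, ih, msubst_up_lift_zero]; rfl

theorem msubst_contractum (σ : ℕ → Term) (K : Ctx) (u v : Term) :
    Term.msubst σ (K.contractum u v) =
      (K.msubst σ).contractum (Term.msubst (up^[K.depth + 1] σ) u) (Term.msubst σ v) := by
  induction K generalizing σ v with
  | hole => exact msubst_subst_zero σ u v
  | app K P ih => simp only [contractum, Term.msubst, ih]; rfl
  | lam K ih => simp only [contractum, Term.msubst, ih, msubst_up_lift_zero]; rfl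

theorem steps_contractum (K : Ctx) (u : Term) {v v' : Term} (h : StepAll v v') :
    Steps (K.contractum u v) (K.contractum u v') := by
  induction K generalizing v v' with
  | hole => exact Steps.subst_of_stepAll u 0 h
  | app K P ih => exact (ih h).appL P
  | lam K ih => exact (ih (h.lift 0)).lam

inductive RedexReduct (K : Ctx) (u v : Term) : Term → Prop
  | tracked {K' : Ctx} {u' : Term} :
      StepAll (K.contractum u v) (K'.contractum u' v) → RedexReduct K u v (K'.redex u' v)
  | arg {v' : Term} : StepAll v v' → RedexReduct K u v (K.redex u v')
  | contract : RedexReduct K u v (K.contractum u v)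
  | permute {K' : Ctx} {u' : Term} : K'.contractum u' v = K.contractum u v →
      weight (K'.redex u' v) < weight (K.redex u v) → RedexReduct K u v (K'.redex u' v)
  /-- An assoc step whose argument is the β-redex `v = (λZ) W`: the new distinguished redex has
  argument `W`, and contracting it gives back the old one with `v` replaced by `Z[W]`. -/
  | assoc {Z W u' : Term} : v = .app (.lam Z) W →
      K.contractum u' W = K.redex u (subst Z 0 W) → RedexReduct K u v (K.redex u' W)

variable {K : Ctx} {u v t : Term}

theorem RedexReduct.app (h : RedexReduct K u v t) (P : Term) :
    RedexReduct (K.app P) u v (.app t P) := by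
  cases h with
  | tracked h => exact .tracked (K' := .app _ P) (h.appL P)
  | arg h => exact .arg h
  | contract => exact .contract
  | permute he hw =>
    exact .permute (K' := .app _ P) (congrArg (Term.app · P) he) (weight_app_lt_app hw P)
  | assoc hv he => exact .assoc hv (congrArg (Term.app · P) he)

theorem RedexReduct.lam (h : RedexReduct K u (lift 0 v) t) : RedexReduct K.lam u v (.lam t) := by
  cases h with
  | tracked h => exact .tracked (K' := .lam _) h.lam
  | arg h =>
    rw [lift_eq_rename] at h
    obtain ⟨r, h⟩ := h
    obtain ⟨v', hv', rfl⟩ := Step.of_rename h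
    rw [← lift_eq_rename]
    exact .arg ⟨r, hv'⟩
  | contract => exact .contract
  | permute he hw =>
    exact .permute (K' := .lam _) (congrArg Term.lam he) (by simp only [redex, weight]; omega)
  | @assoc Z W u' hv he =>
    obtain ⟨Z, W, rfl, rfl, rfl⟩ :
        ∃ Z₀ W₀, v = .app (.lam Z₀) W₀ ∧ Z = lift 1 Z₀ ∧ W = lift 0 W₀ := by
      rcases v with _ | _ | (_ | _ | _) <;> simp_all [lift]
    refine .assoc (Z := Z) rfl ?_
    simp only [contractum, redex, he, lift_zero_subst_zero]

theorem redexReduct_hole {r : Rule} (h : Step r (.app (.lam u) v) t) : RedexReduct hole u v t := by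
  cases h with
  | beta => exact .contract
  | delta M =>
    refine .permute (K' := .lam .hole) ?_ (weight_delta_lt M v)
    simp only [contractum, subst_swap_zero]
    rfl
  | assoc _ Z W =>
    refine .assoc (Z := Z) rfl ?_
    simp only [contractum, redex, subst, subst_lift_self]
  | appCongL _ h =>
    cases h with
    | lamCong h => exact .tracked (K' := .hole) ⟨r, h.subst 0 v⟩
  | appCongR _ h => exact .arg ⟨r, h⟩

theorem redexReduct_beta (K : Ctx) (P : Term) :
    RedexReduct (.app (.lam K) P) u v (subst (K.redex u (lift 0 v)) 0 P) := by
  have hr := msubst_redex (substAt 0 P) K u (lift 0 v)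
  have hc := msubst_contractum (substAt 0 P) K u (lift 0 v)
  simp only [← subst_eq_msubst, subst_lift_self] at hr hc
  rw [hr]
  exact .tracked ⟨.beta, by rw [← hc]; exact .beta _ _⟩

theorem redexReduct_delta (K : Ctx) (P : Term) :
    RedexReduct (.app (.lam (.lam K)) P) u v
      (.lam (.app (.lam (swap 0 (K.redex u (lift 0 (lift 0 v))))) (lift 0 P))) := by
  have hr := msubst_redex (var ∘ swapRen 0) K u (lift 0 (lift 0 v))
  have hc := msubst_contractum (var ∘ swapRen 0) K u (lift 0 (lift 0 v))
  simp only [← rename_eq_msubst, ← swap_eq_rename, swap_zero_lift_zero_lift_zero] at hr hc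
  rw [hr]
  refine .tracked (K' := .lam (.app (.lam _) _)) ⟨.delta, ?_⟩
  simp only [contractum]
  rw [← hc]
  exact .delta _ _

theorem redexReduct_gamma_hole (P : Term) :
    RedexReduct (.app .hole P) u v (.app (.lam (.app u (lift 0 P))) v) := by
  refine .permute (K' := .hole) ?_ (weight_gamma_lt u v P)
  simp only [contractum, subst, subst_lift_self]

theorem redexReduct_gamma (K : Ctx) (N P : Term) :
    RedexReduct (.app (.app (.lam K) N) P) u v
      (.app (.lam (.app (K.redex u (lift 0 v)) (lift 0 P))) N) :=
  .tracked (K' := .app (.lam (.app K _)) _) ⟨.gamma, .gamma _ _ _⟩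

theorem redexReduct_assoc (K : Ctx) (Z W : Term) :
    RedexReduct (.app K (.app (.lam Z) W)) u v (.app (.lam (.app (lift 0 (K.redex u v)) Z)) W) := by
  have hr := msubst_redex (var ∘ liftRen 0) K u v
  have hc := msubst_contractum (var ∘ liftRen 0) K u v
  simp only [← rename_eq_msubst, ← lift_eq_rename] at hr hc
  rw [hr]
  refine .tracked (K' := .app (.lam (.app _ _)) _) ⟨.assoc, ?_⟩
  simp only [contractum]
  rw [← hc]
  exact .assoc _ _ _

theorem _root_.Step.redexReduct {r : Rule} {t : Term} (h : Step r (K.redex u v) t) :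
    RedexReduct K u v t := by
  induction K generalizing v t with
  | hole => exact redexReduct_hole h
  | lam K ih =>
    cases h with
    | lamCong h => exact (ih h).lam
  | app K P ih =>
    change Step r (.app (K.redex u v) P) t at h
    generalize hx : K.redex u v = x at h
    cases h with
    | beta M N =>
      cases K <;> cases hx
      exact redexReduct_beta _ _
    | delta M N =>
      rcases K with _ | _ | (_ | _ | K) <;> cases hx
      exact redexReduct_delta _ _
    | gamma M N P =>
      rcases K with _ | ⟨_ | _ | K, N⟩ | _ <;> cases hx
      · exact redexReduct_gamma_hole _
      · exact redexReduct_gamma _ _ _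
    | assoc M N P =>
      subst hx
      exact redexReduct_assoc _ _ _
    | appCongL _ h =>
      subst hx
      exact (ih h).app P
    | appCongR _ h =>
      subst hx
      exact .tracked (K' := .app K _) ⟨r, .appCongR _ h⟩

end Ctx

theorem Ctx.sn_redex {K : Ctx} {u v : Term} (hv : SN v) (hc : SN (K.contractum u v)) :
    SN (K.redex u v) := by
  refine Acc.intro _ fun t ⟨r, h⟩ => ?_
  cases h.redexReduct with
  | tracked hs =>
    have := hc.height_lt hs
    exact sn_redex hv (hc.inv hs)
  | arg hs =>
    have := hv.height_lt hs
    exact sn_redex (hv.inv hs) (hc.of_steps (steps_contractum K u hs))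
  | contract => exact hc
  | permute he hw =>
    have := congrArg height he
    exact sn_redex hv (he ▸ hc)
  | @assoc Z W u' hvZW he =>
    have hβ : StepAll v (subst Z 0 W) := hvZW ▸ ⟨.beta, .beta Z W⟩
    have := hv.height_lt hβ
    have : height W < height v := hvZW ▸ (hvZW ▸ hv).height_arg_lt
    have hZW := sn_redex (hv.inv hβ) (hc.of_steps (steps_contractum K u hβ))
    exact sn_redex (hvZW ▸ hv).of_app_right (he ▸ hZW)
termination_by (height v, height (K.contractum u v), weight (K.redex u v))
decreasing_by all_goals simp only [Prod.lex_def, true_and]; omega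

/-- `spine h [aₙ, …, a₁]` is `h a₁ … aₙ`. -/
def Term.spine (h : Term) : List Term → Term
  | [] => h
  | a :: args => .app (spine h args) a

def Ctx.ofArgs : List Term → Ctx
  | [] => .hole
  | a :: args => .app (ofArgs args) a

theorem Term.spine_append (h : Term) (post pre : List Term) :
    spine h (post ++ pre) = spine (spine h pre) post := by
  induction post with
  | nil => rfl
  | cons a post ih => simp only [List.cons_append, spine, ih]

theorem Ctx.ofArgs_contractum (args : List Term) (u v : Term) :
    (ofArgs args).contractum u v = spine (subst u 0 v) args := by
  induction args with
  | nil => rfl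
  | cons a args ih => simp only [ofArgs, contractum, spine, ih]

theorem Step.spine_var_cases {r : Rule} {x : ℕ} {args : List Term} {t : Term}
    (h : Step r (spine (.var x) args) t) :
    (∃ post a a' pre, args = post ++ a :: pre ∧ StepAll a a' ∧
        t = spine (.var x) (post ++ a' :: pre)) ∨
    (∃ post Z W pre, args = post ++ .app (.lam Z) W :: pre ∧
        t = (Ctx.ofArgs post).redex (.app (lift 0 (spine (.var x) pre)) Z) W) := by
  induction args generalizing t with
  | nil => cases h
  | cons a args ih =>
    change Step r (.app (spine (.var x) args) a) t at h
    generalize hx : spine (.var x) args = s at h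
    cases h with
    | beta | delta => cases args <;> cases hx
    | gamma => rcases args with _ | ⟨_, _ | _⟩ <;> cases hx
    | assoc _ Z W => exact .inr ⟨[], Z, W, args, rfl, by rw [← hx]; rfl⟩
    | appCongL _ h =>
      subst hx
      rcases ih h with ⟨post, b, b', pre, rfl, hb, rfl⟩ | ⟨post, Z, W, pre, rfl, rfl⟩
      · exact .inl ⟨a :: post, b, b', pre, rfl, hb, rfl⟩
      · exact .inr ⟨a :: post, Z, W, pre, rfl, rfl⟩
    | appCongR _ h =>
      subst hx
      exact .inl ⟨[], a, _, args, rfl, ⟨r, h⟩, rfl⟩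

theorem sn_spine_var (x : ℕ) (args : List Term) (h : ∀ a ∈ args, SN a) :
    SN (spine (.var x) args) := by
  refine Acc.intro _ fun t ⟨r, hs⟩ => ?_
  rcases hs.spine_var_cases with
    ⟨post, a, a', pre, hargs, ha, rfl⟩ | ⟨post, Z, W, pre, hargs, rfl⟩
  · rw [hargs] at h
    have ha' := (h a (by simp)).inv ha
    have : ((post ++ a' :: pre).map height).sum < (args.map height).sum := by
      have := (h a (by simp)).height_lt ha
      simp only [hargs, List.map_append, List.map_cons, List.sum_append, List.sum_cons]
      omega
    refine sn_spine_var x _ ?_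
    simp only [List.forall_mem_append, List.forall_mem_cons] at h ⊢
    exact ⟨h.1, ha', h.2.2⟩
  · rw [hargs] at h
    have hZW : SN (.app (.lam Z) W) := h _ (by simp)
    have hβ : StepAll (.app (.lam Z) W) (subst Z 0 W) := ⟨.beta, .beta Z W⟩
    have : ((post ++ subst Z 0 W :: pre).map height).sum < (args.map height).sum := by
      have := hZW.height_lt hβ
      simp only [hargs, List.map_append, List.map_cons, List.sum_append, List.sum_cons]
      omega
    refine Ctx.sn_redex hZW.of_app_right ?_
    rw [Ctx.ofArgs_contractum, subst, subst_lift_self]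
    change SN (spine (spine (.var x) (subst Z 0 W :: pre)) post)
    rw [← spine_append]
    refine sn_spine_var x _ ?_
    simp only [List.forall_mem_append, List.forall_mem_cons] at h ⊢
    exact ⟨h.1, hZW.inv hβ, h.2.2⟩
termination_by (args.map height).sum
decreasing_by all_goals assumption

mutual
def RedS : STy → Term → Prop
  | .atom _, t => SN t
  | .arrow A S, t => ∀ w, Red A w → RedS S (.app t w)
def Red : Ty → Term → Prop
  | .simple S, t => RedS S t
  | .inter S T, t => RedS S t ∧ Red T t
end

mutual
theorem redS_spine_var : ∀ (S : STy) (x : ℕ) (args : List Term),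
    (∀ a ∈ args, SN a) → RedS S (spine (.var x) args)
  | .atom _, x, args, h => sn_spine_var x args h
  | .arrow A S, x, args, h => fun w hw =>
    redS_spine_var S x (w :: args) (List.forall_mem_cons.2 ⟨sn_of_red A hw, h⟩)

theorem red_spine_var : ∀ (A : Ty) (x : ℕ) (args : List Term),
    (∀ a ∈ args, SN a) → Red A (spine (.var x) args)
  | .simple S, x, args, h => redS_spine_var S x args h
  | .inter S T, x, args, h => ⟨redS_spine_var S x args h, red_spine_var T x args h⟩

theorem sn_of_redS : ∀ (S : STy) {t : Term}, RedS S t → SN t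
  | .atom _, _, h => h
  | .arrow A S, _, h =>
    (sn_of_redS S (h (.var 0) (red_spine_var A 0 [] (List.forall_mem_nil _)))).of_app_left

theorem sn_of_red : ∀ (A : Ty) {t : Term}, Red A t → SN t
  | .simple S, _, h => sn_of_redS S h
  | .inter S _, _, h => sn_of_redS S h.1
end

theorem redS_redex : ∀ (S : STy) (K : Ctx) {u v : Term}, SN v →
    RedS S (K.contractum u v) → RedS S (K.redex u v)
  | .atom _, K, _, _, hv, h => K.sn_redex hv h
  | .arrow _ S, K, _, _, hv, h => fun w hw => redS_redex S (K.app w) hv (h w hw)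

theorem Typing.red_msubst {Γ : List Ty} {t : Term} {A : Ty} (h : Typing Γ t A) {σ : ℕ → Term}
    (hσ : ∀ n B, Γ[n]? = some B → Red B (σ n)) : Red A (msubst σ t) := by
  induction h generalizing σ with
  | var hn => exact hσ _ _ hn
  | app _ _ ihM ihN => exact ihM hσ _ (ihN hσ)
  | @lam Γ M A B _ ih =>
    intro w hw
    refine redS_redex B .hole (sn_of_red A hw) ?_
    rw [Ctx.contractum, subst_eq_msubst, msubst_msubst]
    refine ih fun n C hC => ?_
    cases n with
    | zero =>
      cases hC
      simpa [up, Term.msubst, substAt] using hw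
    | succ n =>
      simpa only [Function.comp, up, msubst_rename, substAt_zero_comp_succ, msubst_var] using
        hσ n C hC
  | interI _ _ ih₁ ih₂ => exact ⟨ih₁ hσ, ih₂ hσ⟩
  | interE1 _ ih => exact (ih hσ).1
  | interE2 _ ih => exact (ih hσ).2

/-- Every term typable in system D is SN for the union of β, δ, γ, assoc. -/
theorem sn_of_typable (Γ : List Ty) (t : Term) (A : Ty) (h : Typing Γ t A) :
    SN t := by
  have := h.red_msubst (σ := var) fun n B _ => red_spine_var B n [] (List.forall_mem_nil _)
  rw [msubst_var] at this
  exact sn_of_red A this
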